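/- (Combinatorial core of Theorem 2: the h-polynomial of the permutohedron is the Eulerian polynomial.) For every natural number n and all integers s, t: ∑_{k=0}^{n} Surj(n+1,k+1) · (s−t)^{n−k} · t^{k} = ∑_{k=0}^{n} A(n+1,k) · s^{k} · t^{n−k}. -/

import Mathlib

open Finset

/-- Number of surjections from an `m`-element set onto a `j`-element set. -/
def Surj (m j : ℕ) : ℕ :=
  Fintype.card {f : Fin m → Fin j // Function.Surjective f}

/-- Number of descents of a permutation of `Fin (m+1)`: indices `i ≤ m-1` with `σ i > σ (i+1)`. -/
def descentCount {m : ℕ} (σ : Equiv.Perm (Fin (m + 1))) : ℕ :=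
  (Finset.univ.filter fun i : Fin m => σ i.succ < σ i.castSucc).card

/-- The Eulerian number `A(n,k)`: number of permutations of `Fin n` with exactly `k` descents. -/
def eulerian (n k : ℕ) : ℕ :=
  match n with
  | 0 => if k = 0 then 1 else 0
  | m + 1 => Fintype.card {σ : Equiv.Perm (Fin (m + 1)) // descentCount σ = k}

/-- The descent set of a permutation. -/
def descentSet {m : ℕ} (σ : Equiv.Perm (Fin (m + 1))) : Finset (Fin m) :=
  Finset.univ.filter fun i : Fin m => σ i.succ < σ i.castSucc

/-- `bfun S i` = number of cut positions in `S` strictly before position `i`. -/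
def bfun {m : ℕ} (S : Finset (Fin m)) (i : Fin (m + 1)) : ℕ :=
  (S.filter fun s => s.castSucc < i).card

lemma bfun_mono {m : ℕ} (S : Finset (Fin m)) : Monotone (bfun S) := by
  intro i j hij
  exact Finset.card_le_card (Finset.monotone_filter_right S (fun s _ hs => lt_of_lt_of_le hs hij))

lemma bfun_zero {m : ℕ} (S : Finset (Fin m)) : bfun S 0 = 0 := by
  simp [bfun, Fin.not_lt_zero]

lemma bfun_last {m : ℕ} (S : Finset (Fin m)) : bfun S (Fin.last m) = S.card := by
  unfold bfun
  rw [Finset.filter_true_of_mem fun s _ => Fin.castSucc_lt_last s]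

lemma bfun_le {m : ℕ} (S : Finset (Fin m)) (i : Fin (m + 1)) : bfun S i ≤ S.card :=
  Finset.card_le_card (Finset.filter_subset _ _)

lemma bfun_succ {m : ℕ} (S : Finset (Fin m)) (i : Fin m) :
    bfun S i.succ = bfun S i.castSucc + (if i ∈ S then 1 else 0) := by
  unfold bfun
  have h : (S.filter fun s => s.castSucc < i.succ)
      = (S.filter fun s => s.castSucc < i.castSucc) ∪ (S.filter fun s => s = i) := by
    rw [← Finset.filter_or]
    apply Finset.filter_congr
    intro s _
    simp only [Fin.lt_def, Fin.coe_castSucc, Fin.val_succ, ← Fin.val_eq_val]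
    omega
  rw [h, Finset.card_union_of_disjoint, Finset.filter_eq']
  · split <;> simp
  · rw [Finset.disjoint_filter]
    intro s _ hs he
    rw [he] at hs
    exact lt_irrefl _ hs

lemma exists_bfun_eq {m : ℕ} (S : Finset (Fin m)) {v : ℕ} (hv : v ≤ S.card) :
    ∃ i, bfun S i = v := by
  have hne : (Finset.univ.filter fun i : Fin (m + 1) => v ≤ bfun S i).Nonempty :=
    ⟨Fin.last m, by simp [bfun_last, hv]⟩
  set c := Finset.min' _ hne with hc
  have hcmem : c ∈ Finset.univ.filter fun i : Fin (m + 1) => v ≤ bfun S i :=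
    Finset.min'_mem _ hne
  have hcv : v ≤ bfun S c := (Finset.mem_filter.mp hcmem).2
  rcases Fin.eq_zero_or_eq_succ c with h0 | ⟨j, hj⟩
  · refine ⟨0, ?_⟩
    rw [h0, bfun_zero] at hcv
    rw [bfun_zero]; omega
  · have hlt : j.castSucc < c := hj ▸ Fin.castSucc_lt_succ (i := j)
    have hnot : ¬ v ≤ bfun S j.castSucc := by
      intro hle
      have : c ≤ j.castSucc := Finset.min'_le _ j.castSucc (Finset.mem_filter.mpr ⟨Finset.mem_univ _, hle⟩)
      exact absurd this (not_le_of_gt hlt)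
    have hstep := bfun_succ S j
    rw [hj] at hcv
    refine ⟨j.succ, ?_⟩
    split at hstep <;> omega

lemma chain_lt {m : ℕ} (σ : Equiv.Perm (Fin (m + 1))) :
    ∀ (j i : Fin (m + 1)), i < j →
      (∀ l : Fin m, i ≤ l.castSucc → l.succ ≤ j → σ l.castSucc < σ l.succ) → σ i < σ j := by
  intro j
  induction j using Fin.induction with
  | zero => intro i hi _; exact absurd hi (Fin.not_lt_zero i)
  | succ w ih =>
    intro i hi hl
    have hiw : i ≤ w.castSucc := by
      rw [Fin.le_def, Fin.coe_castSucc]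
      rw [Fin.lt_def, Fin.val_succ] at hi
      omega
    have hw : σ w.castSucc < σ w.succ := hl w hiw le_rfl
    rcases eq_or_lt_of_le hiw with he | hlt
    · rw [he]; exact hw
    · exact lt_trans (ih i hlt fun l h1 h2 =>
        hl l h1 (h2.trans (Fin.castSucc_le_succ w))) hw

/-- The set of strict rises of the sorted version of `f`. -/
def risesSet {n k : ℕ} (f : Fin (n + 1) → Fin (k + 1)) : Finset (Fin n) :=
  Finset.univ.filter fun i : Fin n =>
    f (Tuple.sort f i.castSucc) < f (Tuple.sort f i.succ)

section SortLemmas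

variable {n k : ℕ} {f : Fin (n + 1) → Fin (k + 1)}

lemma sorted_mono : Monotone fun j => f (Tuple.sort f j) := Tuple.monotone_sort f

lemma sorted_zero (hf : Function.Surjective f) : f (Tuple.sort f 0) = 0 := by
  obtain ⟨x, hx⟩ := hf 0
  have := sorted_mono (f := f) (Fin.zero_le ((Tuple.sort f).symm x))
  simp only at this
  rw [Equiv.apply_symm_apply, hx] at this
  exact Fin.le_zero_iff.mp this

lemma sorted_last (hf : Function.Surjective f) : f (Tuple.sort f (Fin.last n)) = Fin.last k := by
  obtain ⟨x, hx⟩ := hf (Fin.last k)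
  have := sorted_mono (f := f) (Fin.le_last ((Tuple.sort f).symm x))
  simp only at this
  rw [Equiv.apply_symm_apply, hx] at this
  exact Fin.last_le_iff.mp this

lemma sorted_step (hf : Function.Surjective f) (i : Fin n) :
    (f (Tuple.sort f i.succ) : ℕ) ≤ (f (Tuple.sort f i.castSucc) : ℕ) + 1 := by
  by_contra h
  push_neg at h
  have hvlt : (f (Tuple.sort f i.castSucc) : ℕ) + 1 < k + 1 :=
    lt_of_le_of_lt (Nat.succ_le_of_lt (by omega)) (f (Tuple.sort f i.succ)).isLt
  set v : Fin (k + 1) := ⟨(f (Tuple.sort f i.castSucc) : ℕ) + 1, hvlt⟩ with hv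
  obtain ⟨x, hx⟩ := hf v
  set j := (Tuple.sort f).symm x with hj
  have hfj : f (Tuple.sort f j) = v := by rw [hj, Equiv.apply_symm_apply, hx]
  rcases le_or_gt j i.castSucc with hle | hlt
  · have := sorted_mono (f := f) hle
    simp only at this
    rw [hfj] at this
    rw [Fin.le_def] at this
    simp [hv] at this
  · have hsle : i.succ ≤ j := by
      rw [Fin.le_def, Fin.val_succ]
      rw [Fin.lt_def, Fin.coe_castSucc] at hlt
      omega
    have := sorted_mono (f := f) hsle
    simp only at this
    rw [hfj] at this
    rw [Fin.le_def] at this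
    simp only [hv] at this
    omega

lemma sorted_eq_bfun (hf : Function.Surjective f) (j : Fin (n + 1)) :
    (f (Tuple.sort f j) : ℕ) = bfun (risesSet f) j := by
  induction j using Fin.induction with
  | zero => rw [bfun_zero, sorted_zero hf]; rfl
  | succ i ih =>
    rw [bfun_succ, ← ih]
    have hmono : f (Tuple.sort f i.castSucc) ≤ f (Tuple.sort f i.succ) :=
      sorted_mono (f := f) (Fin.castSucc_le_succ i)
    have hstep := sorted_step hf i
    by_cases hmem : i ∈ risesSet f
    · have hlt : f (Tuple.sort f i.castSucc) < f (Tuple.sort f i.succ) :=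
        (Finset.mem_filter.mp hmem).2
      rw [Fin.lt_def] at hlt
      rw [if_pos hmem]
      omega
    · have : ¬ f (Tuple.sort f i.castSucc) < f (Tuple.sort f i.succ) := by
        intro hlt
        exact hmem (Finset.mem_filter.mpr ⟨Finset.mem_univ _, hlt⟩)
      have heq : f (Tuple.sort f i.castSucc) = f (Tuple.sort f i.succ) :=
        le_antisymm hmono (not_lt.mp this)
      rw [if_neg hmem, heq]
      omega

lemma card_risesSet (hf : Function.Surjective f) : (risesSet f).card = k := by
  have h := sorted_eq_bfun hf (Fin.last n)
  rw [bfun_last, sorted_last hf] at h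
  simp at h
  omega

lemma descentSet_sort_subset (hf : Function.Surjective f) :
    descentSet (Tuple.sort f) ⊆ risesSet f := by
  intro i hi
  by_contra hmem
  have hmono : f (Tuple.sort f i.castSucc) ≤ f (Tuple.sort f i.succ) :=
    sorted_mono (f := f) (Fin.castSucc_le_succ i)
  have hnlt : ¬ f (Tuple.sort f i.castSucc) < f (Tuple.sort f i.succ) := by
    intro hlt
    exact hmem (Finset.mem_filter.mpr ⟨Finset.mem_univ _, hlt⟩)
  have heq : f (Tuple.sort f i.castSucc) = f (Tuple.sort f i.succ) :=
    le_antisymm hmono (not_lt.mp hnlt)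
  have hsp := (Tuple.eq_sort_iff (f := f) (σ := Tuple.sort f)).mp rfl
  have := hsp.2 i.castSucc i.succ (Fin.castSucc_lt_succ (i := i)) heq
  have hdesc := (Finset.mem_filter.mp hi).2
  exact absurd this (not_lt.mpr (le_of_lt hdesc))

end SortLemmas

section Bijection

variable {n k : ℕ}

/-- From a pair (permutation, cut set) build a function. -/
def pairToFun (σ : Equiv.Perm (Fin (n + 1))) (S : Finset (Fin n)) (hS : S.card = k)
    (x : Fin (n + 1)) : Fin (k + 1) :=
  ⟨bfun S (σ.symm x), by have := bfun_le S (σ.symm x); omega⟩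

lemma pairToFun_surj (σ : Equiv.Perm (Fin (n + 1))) (S : Finset (Fin n)) (hS : S.card = k) :
    Function.Surjective (pairToFun σ S hS) := by
  intro y
  obtain ⟨i, hi⟩ := exists_bfun_eq S (v := (y : ℕ)) (by rw [hS]; omega)
  refine ⟨σ i, ?_⟩
  apply Fin.ext
  simp [pairToFun, hi]

lemma sort_pairToFun (σ : Equiv.Perm (Fin (n + 1))) (S : Finset (Fin n)) (hS : S.card = k)
    (hD : descentSet σ ⊆ S) : Tuple.sort (pairToFun σ S hS) = σ := by
  symm
  rw [Tuple.eq_sort_iff]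
  constructor
  · intro i j hij
    simp only [Function.comp_apply, pairToFun]
    rw [Fin.le_def]
    simp only [Equiv.symm_apply_apply]
    exact bfun_mono S hij
  · intro i j hij heq
    have hbeq : bfun S i = bfun S j := by
      have := congrArg Fin.val heq
      simpa [pairToFun, Equiv.symm_apply_apply] using this
    apply chain_lt σ j i hij
    intro l h1 h2
    have hlS : l ∉ S := by
      intro hmem
      have hstep := bfun_succ S l
      rw [if_pos hmem] at hstep
      have h1' : bfun S i ≤ bfun S l.castSucc := bfun_mono S h1
      have h2' : bfun S l.succ ≤ bfun S j := bfun_mono S h2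
      omega
    have : l ∉ descentSet σ := fun hmem => hlS (hD hmem)
    simp only [descentSet, Finset.mem_filter, Finset.mem_univ, true_and, not_lt] at this
    rcases lt_or_eq_of_le this with hlt | heq'
    · exact hlt
    · exfalso
      have := σ.injective heq'
      have h2 := congrArg Fin.val this
      simp at h2

end Bijection

section Bijection2

variable {n k : ℕ}

lemma risesSet_pairToFun (σ : Equiv.Perm (Fin (n + 1))) (S : Finset (Fin n)) (hS : S.card = k)
    (hD : descentSet σ ⊆ S) : risesSet (pairToFun σ S hS) = S := by
  ext i
  simp only [risesSet, Finset.mem_filter, Finset.mem_univ, true_and,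
    sort_pairToFun σ S hS hD]
  have hstep := bfun_succ S i
  constructor
  · intro hlt
    rw [Fin.lt_def] at hlt
    simp only [pairToFun, Equiv.symm_apply_apply] at hlt
    by_contra hmem
    rw [if_neg hmem] at hstep
    omega
  · intro hmem
    rw [if_pos hmem] at hstep
    rw [Fin.lt_def]
    simp only [pairToFun, Equiv.symm_apply_apply]
    omega

lemma pairToFun_sort {f : Fin (n + 1) → Fin (k + 1)} (hf : Function.Surjective f)
    (hcard : (risesSet f).card = k) :
    pairToFun (Tuple.sort f) (risesSet f) hcard = f := by
  funext x
  apply Fin.ext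
  simp only [pairToFun]
  rw [← sorted_eq_bfun hf, Equiv.apply_symm_apply]

lemma surj_card_eq (n k : ℕ) :
    Surj (n + 1) (k + 1) =
      (Finset.univ.filter fun p : Equiv.Perm (Fin (n + 1)) × Finset (Fin n) =>
        descentSet p.1 ⊆ p.2 ∧ p.2.card = k).card := by
  classical
  rw [Surj, Fintype.card_subtype]
  refine Finset.card_bij'
    (fun f hf => (Tuple.sort f, risesSet f))
    (fun p hp => pairToFun p.1 p.2 (by
      have := (Finset.mem_filter.mp hp).2.2; exact this))
    ?_ ?_ ?_ ?_
  · intro f hf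
    have hsurj : Function.Surjective f := (Finset.mem_filter.mp hf).2
    refine Finset.mem_filter.mpr ⟨Finset.mem_univ _, descentSet_sort_subset hsurj,
      card_risesSet hsurj⟩
  · intro p hp
    have h := (Finset.mem_filter.mp hp).2
    exact Finset.mem_filter.mpr ⟨Finset.mem_univ _, pairToFun_surj p.1 p.2 h.2⟩
  · intro f hf
    have hsurj : Function.Surjective f := (Finset.mem_filter.mp hf).2
    exact pairToFun_sort hsurj (card_risesSet hsurj)
  · intro p hp
    have h := (Finset.mem_filter.mp hp).2
    exact Prod.ext (sort_pairToFun p.1 p.2 h.2 h.1) (risesSet_pairToFun p.1 p.2 h.2 h.1)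

end Bijection2

section Algebra

lemma powerset_sum {α : Type*} [DecidableEq α] (U : Finset α) (a b : ℤ) :
    ∑ T ∈ U.powerset, a ^ (U.card - T.card) * b ^ T.card = (a + b) ^ U.card := by
  have h := Finset.prod_add (fun _ : α => b) (fun _ : α => a) U
  simp only [Finset.prod_const] at h
  calc ∑ T ∈ U.powerset, a ^ (U.card - T.card) * b ^ T.card
      = ∑ T ∈ U.powerset, b ^ T.card * a ^ (U \ T).card := by
        apply Finset.sum_congr rfl
        intro T hT
        rw [Finset.card_sdiff_of_subset (Finset.mem_powerset.mp hT), mul_comm]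
    _ = (b + a) ^ U.card := h.symm
    _ = (a + b) ^ U.card := by rw [add_comm]

lemma subsetBinomSum {n : ℕ} (D : Finset (Fin n)) (s t : ℤ) :
    ∑ S ∈ Finset.univ.filter (fun S : Finset (Fin n) => D ⊆ S),
      (s - t) ^ (n - S.card) * t ^ S.card = t ^ D.card * s ^ (n - D.card) := by
  classical
  have hDle : D.card ≤ n := by
    have := Finset.card_le_univ D
    rwa [Fintype.card_fin] at this
  have hDc : Dᶜ.card = n - D.card := by rw [Finset.card_compl, Fintype.card_fin]
  have main : ∑ S ∈ Finset.univ.filter (fun S : Finset (Fin n) => D ⊆ S),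
      (s - t) ^ (n - S.card) * t ^ S.card
      = ∑ T ∈ Dᶜ.powerset, t ^ D.card * ((s - t) ^ (Dᶜ.card - T.card) * t ^ T.card) := by
    apply Finset.sum_nbij' (i := fun S => S \ D) (j := fun T => D ∪ T)
    · intro S hS
      simp only [Finset.mem_powerset]
      intro x hx
      simp only [Finset.mem_sdiff] at hx
      simp [Finset.mem_compl, hx.2]
    · intro T hT
      simp only [Finset.mem_filter, Finset.mem_univ, true_and]
      exact Finset.subset_union_left
    · intro S hS
      exact Finset.union_sdiff_of_subset (Finset.mem_filter.mp hS).2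
    · intro T hT
      have hT' : T ⊆ Dᶜ := Finset.mem_powerset.mp hT
      have hdisj : Disjoint D T := by
        rw [Finset.disjoint_right]
        intro x hx
        exact Finset.mem_compl.mp (hT' hx)
      rw [Finset.union_sdiff_cancel_left hdisj]
    · intro S hS
      have hD : D ⊆ S := (Finset.mem_filter.mp hS).2
      have hdisj : Disjoint D (S \ D) := Finset.disjoint_sdiff
      have hcard : S.card = D.card + (S \ D).card := by
        rw [← Finset.card_union_of_disjoint hdisj, Finset.union_sdiff_of_subset hD]
      have hSle : S.card ≤ n := by
        have := Finset.card_le_univ S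
        rwa [Fintype.card_fin] at this
      have hexp : n - S.card = Dᶜ.card - (S \ D).card := by omega
      rw [hexp, hcard, pow_add]
      ring
  rw [main, ← Finset.mul_sum, powerset_sum, sub_add_cancel, hDc]

end Algebra

section Reversal

lemma not_lt_iff_of_perm {m : ℕ} (σ : Equiv.Perm (Fin (m + 1))) (j : Fin m) :
    σ j.castSucc < σ j.succ ↔ ¬ σ j.succ < σ j.castSucc := by
  have hne : σ j.castSucc ≠ σ j.succ := fun h =>
    absurd (σ.injective h) (ne_of_lt (Fin.castSucc_lt_succ (i := j)))
  constructor
  · exact fun h => not_lt.mpr h.le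
  · exact fun h => lt_of_le_of_ne (not_lt.mp h) hne

lemma descentCount_le {m : ℕ} (σ : Equiv.Perm (Fin (m + 1))) : descentCount σ ≤ m := by
  unfold descentCount
  have := Finset.card_filter_le Finset.univ
    (fun i : Fin m => σ i.succ < σ i.castSucc)
  rwa [Finset.card_univ, Fintype.card_fin] at this

lemma descentCount_mul_rev {m : ℕ} (σ : Equiv.Perm (Fin (m + 1))) :
    descentCount (σ * Fin.revPerm) = m - descentCount σ := by
  classical
  set τ : Equiv.Perm (Fin (m + 1)) := σ * Fin.revPerm with hτ
  have happ : ∀ x : Fin (m + 1), τ x = σ x.rev := fun x => rfl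
  have himg : (Finset.univ.filter fun i : Fin m => τ i.succ < τ i.castSucc)
      = (Finset.univ.filter fun i : Fin m => ¬ σ i.succ < σ i.castSucc).image Fin.rev := by
    ext i
    simp only [Finset.mem_image, Finset.mem_filter, Finset.mem_univ, true_and, happ,
      Fin.rev_succ, Fin.rev_castSucc]
    constructor
    · intro h
      refine ⟨i.rev, ?_, Fin.rev_rev i⟩
      exact (not_lt_iff_of_perm σ i.rev).mp h
    · rintro ⟨j, hj, rfl⟩
      rw [Fin.rev_rev]
      exact (not_lt_iff_of_perm σ j).mpr hj
  have hsum := Finset.card_filter_add_card_filter_not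
    (s := (Finset.univ : Finset (Fin m))) (fun i : Fin m => σ i.succ < σ i.castSucc)
  rw [Finset.card_univ, Fintype.card_fin] at hsum
  unfold descentCount
  rw [himg, Finset.card_image_of_injective _ Fin.rev_injective]
  omega

end Reversal

lemma descentCount_eq_card_descentSet {m : ℕ} (σ : Equiv.Perm (Fin (m + 1))) :
    descentCount σ = (descentSet σ).card := rfl

/-- The `h`-polynomial of the permutohedron `Π^n` (whose number of codimension-`k` faces
is `Surj(n+1,k+1)`) is the homogeneous Eulerian polynomial:
`∑_k Surj(n+1,k+1)·(s-t)^{n-k}·t^k = ∑_k A(n+1,k)·s^k·t^{n-k}`. -/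
theorem h_poly_permutohedron_eq_eulerian (n : ℕ) (s t : ℤ) :
    ∑ k ∈ Finset.range (n + 1), (Surj (n + 1) (k + 1) : ℤ) * (s - t) ^ (n - k) * t ^ k =
      ∑ k ∈ Finset.range (n + 1), (eulerian (n + 1) k : ℤ) * s ^ k * t ^ (n - k) := by
  classical
  have hR : ∑ k ∈ Finset.range (n + 1), (eulerian (n + 1) k : ℤ) * s ^ k * t ^ (n - k)
      = ∑ σ : Equiv.Perm (Fin (n + 1)),
          s ^ descentCount σ * t ^ (n - descentCount σ) := by
    have hcard : ∀ k, eulerian (n + 1) k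
        = (Finset.univ.filter fun σ : Equiv.Perm (Fin (n + 1)) =>
            descentCount σ = k).card := by
      intro k
      simp [eulerian, Fintype.card_subtype]
    calc ∑ k ∈ Finset.range (n + 1), (eulerian (n + 1) k : ℤ) * s ^ k * t ^ (n - k)
        = ∑ k ∈ Finset.range (n + 1),
            ∑ σ ∈ Finset.univ.filter (fun σ : Equiv.Perm (Fin (n + 1)) =>
              descentCount σ = k), s ^ descentCount σ * t ^ (n - descentCount σ) := by
          apply Finset.sum_congr rfl
          intro k _
          rw [Finset.sum_congr rfl (fun σ hσ => by
            rw [(Finset.mem_filter.mp hσ).2]), Finset.sum_const, nsmul_eq_mul,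
            hcard k, mul_assoc]
      _ = _ := Finset.sum_fiberwise_of_maps_to
          (fun σ _ => Finset.mem_range.mpr (Nat.lt_succ_of_le (descentCount_le σ))) _
  have hL : ∑ k ∈ Finset.range (n + 1),
        (Surj (n + 1) (k + 1) : ℤ) * (s - t) ^ (n - k) * t ^ k
      = ∑ σ : Equiv.Perm (Fin (n + 1)),
          t ^ descentCount σ * s ^ (n - descentCount σ) := by
    calc ∑ k ∈ Finset.range (n + 1),
          (Surj (n + 1) (k + 1) : ℤ) * (s - t) ^ (n - k) * t ^ k
        = ∑ k ∈ Finset.range (n + 1),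
            ∑ p ∈ (Finset.univ.filter
                fun p : Equiv.Perm (Fin (n + 1)) × Finset (Fin n) =>
                  descentSet p.1 ⊆ p.2).filter (fun p => p.2.card = k),
              (s - t) ^ (n - p.2.card) * t ^ p.2.card := by
          apply Finset.sum_congr rfl
          intro k _
          rw [Finset.sum_congr rfl (fun p hp => by
            rw [(Finset.mem_filter.mp hp).2]), Finset.sum_const, nsmul_eq_mul,
            Finset.filter_filter, ← surj_card_eq n k, mul_assoc]
      _ = ∑ p ∈ Finset.univ.filter
            (fun p : Equiv.Perm (Fin (n + 1)) × Finset (Fin n) =>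
              descentSet p.1 ⊆ p.2),
            (s - t) ^ (n - p.2.card) * t ^ p.2.card := by
          apply Finset.sum_fiberwise_of_maps_to
          intro p _
          refine Finset.mem_range.mpr (Nat.lt_succ_of_le ?_)
          have := Finset.card_le_univ p.2
          rwa [Fintype.card_fin] at this
      _ = ∑ σ : Equiv.Perm (Fin (n + 1)),
            ∑ S ∈ Finset.univ.filter (fun S : Finset (Fin n) => descentSet σ ⊆ S),
              (s - t) ^ (n - S.card) * t ^ S.card := by
          rw [Finset.sum_filter, Fintype.sum_prod_type]
          apply Finset.sum_congr rfl
          intro σ _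
          rw [Finset.sum_filter]
      _ = ∑ σ : Equiv.Perm (Fin (n + 1)),
            t ^ descentCount σ * s ^ (n - descentCount σ) := by
          apply Finset.sum_congr rfl
          intro σ _
          rw [subsetBinomSum (descentSet σ) s t, descentCount_eq_card_descentSet]
  rw [hL, hR]
  apply Fintype.sum_equiv (Equiv.mulRight (Fin.revPerm : Equiv.Perm (Fin (n + 1))))
  intro σ
  rw [Equiv.coe_mulRight, descentCount_mul_rev, Nat.sub_sub_self (descentCount_le σ)]
  ring
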